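/- For integers p, r and an odd positive integer q with gcd(p,q) = 1, the generalized quadratic Gauss sum 𝔾(p,r,q) := Σ_{n=0}^{q−1} exp(2πi(p n² + r n)/q) satisfies |𝔾(p,r,q)|² = q. -/

import Mathlib

/-!
Write `f x = a x² + b x` and `S = ∑ₓ ψ (f x)` for a primitive additive character `ψ` of a finite
commutative ring. Substituting `x = y + h` in `S * conj S = ∑_{x,y} ψ (f x - f y)` and using
`f (y + h) - f y = f h + 2 a h y`, the sum over `y` is a character sum of `y ↦ ψ (2 a h y)`, which
vanishes unless `2 a h = 0`. When `2 a` is a unit only `h = 0` survives, so `|S|² = #R`.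
For `R = ℤ/qℤ` with `q` odd and `a` prime to `q`, `2 a` is indeed a unit.
-/

open Finset

namespace AddChar

variable {R : Type*} [CommRing R] [Fintype R]

lemma normSq_sum_quadratic (ψ : AddChar R ℂ) (a b : R) :
    (Complex.normSq (∑ x, ψ (a * x ^ 2 + b * x)) : ℂ) =
      ∑ h, ψ (a * h ^ 2 + b * h) * ∑ y, ψ (y * (2 * a * h)) := by
  rw [← Complex.mul_conj, map_sum, mul_sum]
  calc ∑ y, (∑ x, ψ (a * x ^ 2 + b * x)) * (starRingEnd ℂ) (ψ (a * y ^ 2 + b * y))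
      = ∑ y, ∑ h, ψ (a * h ^ 2 + b * h) * ψ (y * (2 * a * h)) := by
        refine sum_congr rfl fun y _ => ?_
        rw [← map_neg_eq_conj, sum_mul]
        refine (Fintype.sum_equiv (Equiv.addLeft y) _ _ fun h => ?_).symm
        rw [Equiv.coe_addLeft, ← map_add_eq_mul, ← map_add_eq_mul]
        ring_nf
    _ = ∑ h, ψ (a * h ^ 2 + b * h) * ∑ y, ψ (y * (2 * a * h)) := by
        rw [sum_comm]
        simp only [mul_sum]

lemma norm_sq_sum_quadratic_of_isUnit {ψ : AddChar R ℂ} (hψ : ψ.IsPrimitive) {a : R}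
    (ha : IsUnit (2 * a)) (b : R) :
    ‖∑ x, ψ (a * x ^ 2 + b * x)‖ ^ 2 = Fintype.card R := by
  classical
  have h_inner (h : R) :
      ∑ y, ψ (y * (2 * a * h)) = if h = 0 then (Fintype.card R : ℂ) else 0 := by
    rw [sum_mulShift _ hψ, ha.mul_right_eq_zero, Nat.cast_ite, Nat.cast_zero]
  rw [Complex.sq_norm, ← Complex.ofReal_inj, normSq_sum_quadratic]
  simp [h_inner]

end AddChar

namespace ZMod

lemma sum_range_natCast {M : Type*} [AddCommMonoid M] (q : ℕ) [NeZero q] (f : ZMod q → M) :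
    ∑ n ∈ range q, f n = ∑ x, f x :=
  sum_bij' (fun n _ => (n : ZMod q)) (fun x _ => x.val) (fun _ _ => mem_univ _)
    (fun x _ => mem_range.mpr x.val_lt) (fun _ hn => val_natCast_of_lt (mem_range.mp hn))
    (fun x _ => natCast_zmod_val x) (fun _ _ => rfl)

lemma isUnit_intCast_of_gcd_eq_one {q : ℕ} {p : ℤ} (h : Int.gcd p q = 1) : IsUnit (p : ZMod q) := by
  simpa [isCoprime_zero_right] using
    (Int.isCoprime_iff_gcd_eq_one.mpr h).map (Int.castRingHom (ZMod q))

lemma isUnit_two_of_odd {q : ℕ} (hq : Odd q) : IsUnit (2 : ZMod q) := by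
  exact_mod_cast (isUnit_iff_coprime 2 q).mpr (Nat.coprime_two_left.mpr hq)

end ZMod

theorem gauss_sum_odd_modulus_sq (p r : ℤ) (q : ℕ) (hq : 0 < q) (hqo : Odd q)
    (hpq : Int.gcd p (q : ℤ) = 1) :
    ‖(∑ n ∈ Finset.range q,
        Complex.exp (2 * Real.pi * Complex.I * ((p : ℂ) * (n : ℂ) ^ 2 + (r : ℂ) * (n : ℂ)) / (q : ℂ)))‖ ^ 2 =
      q := by
  have : NeZero q := ⟨hq.ne'⟩
  have h_term (n : ℕ) :
      Complex.exp (2 * Real.pi * Complex.I * ((p : ℂ) * (n : ℂ) ^ 2 + (r : ℂ) * (n : ℂ)) / (q : ℂ)) =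
        ZMod.stdAddChar ((p : ZMod q) * (n : ZMod q) ^ 2 + (r : ZMod q) * (n : ZMod q)) := by
    have := ZMod.stdAddChar_coe (N := q) (p * n ^ 2 + r * n)
    push_cast at this
    exact this.symm
  simp_rw [h_term]
  rw [ZMod.sum_range_natCast q (fun x => ZMod.stdAddChar ((p : ZMod q) * x ^ 2 + (r : ZMod q) * x)),
    AddChar.norm_sq_sum_quadratic_of_isUnit (ZMod.isPrimitive_stdAddChar q)
      ((ZMod.isUnit_two_of_odd hqo).mul (ZMod.isUnit_intCast_of_gcd_eq_one hpq)), ZMod.card]
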